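/- arXiv:2502.10203 — 6 statements merged into one kernel-verified Lean document; each statement's English description precedes it below -/
import Mathlib

section
/- Let E be a finite-dimensional real inner product space, F : E → ℝ differentiable with ∇F L-Lipschitz (L > 0), and let g, n : Ω → E be independent square-integrable random vectors with E[n] = 0 and E[‖n‖²] = τ/K (τ ≥ 0, K > 0). Fix w ∈ E and constants μ_F, M_e, M_v, M_E, M_V > 0 and b > 0, and assume: (i) ⟨∇F(w), E[g]⟩ ≥ μ_F‖∇F(w)‖², and (ii) E[‖g‖²] ≤ M_e + M_v/(Kb) + (M_E + M_V/(Kb))‖∇F(w)‖². Then for every step size η with 0 < η ≤ μ_F / (L(M_E + M_V/(Kb))), it holds that E[F(w − η(g + n))] − F(w) ≤ −(ημ_F/2)‖∇F(w)‖² + Lτη²/(2K) + (Lη²/2)(M_e + M_v/(Kb)). -/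
open MeasureTheory ProbabilityTheory
open scoped RealInnerProductSpace

lemma stmt1_quadBound {E : Type*} [NormedAddCommGroup E] [InnerProductSpace ℝ E] [CompleteSpace E]
    (F : E → ℝ) (hF : Differentiable ℝ F) (L : ℝ) (hL : 0 ≤ L)
    (hLip : ∀ x y : E, ‖gradient F x - gradient F y‖ ≤ L * ‖x - y‖)
    (x v : E) :
    |F (x + v) - F x - ⟪gradient F x, v⟫| ≤ L / 2 * ‖v‖ ^ 2 := by
  have hgradcont : Continuous (gradient F) :=
    (LipschitzWith.of_dist_le_mul (K := L.toNNReal) fun a b => by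
      simpa [dist_eq_norm, Real.coe_toNNReal L hL] using hLip a b).continuous
  have hφ : ∀ t : ℝ, HasDerivAt (fun t : ℝ => F (x + t • v))
      ⟪gradient F (x + t • v), v⟫ t := by
    intro t
    have h1 : HasDerivAt (fun t : ℝ => x + t • v) v t := by
      simpa using ((hasDerivAt_id t).smul_const v).const_add x
    have h2 : HasFDerivAt F ((InnerProductSpace.toDual ℝ E) (gradient F (x + t • v)))
        (x + t • v) := hasGradientAt_iff_hasFDerivAt.mp (hF _).hasGradientAt
    simpa [Function.comp_def] using h2.comp_hasDerivAt t h1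
  have hdc : Continuous fun t : ℝ => ⟪gradient F (x + t • v), v⟫ :=
    Continuous.inner (hgradcont.comp (by continuity)) continuous_const
  have key : ∫ t in (0:ℝ)..1, ⟪gradient F (x + t • v), v⟫ = F (x + v) - F x := by
    have := intervalIntegral.integral_eq_sub_of_hasDerivAt (f := fun t : ℝ => F (x + t • v))
      (fun t _ => hφ t) (hdc.intervalIntegrable 0 1)
    simpa using this
  have heq : F (x + v) - F x - ⟪gradient F x, v⟫
      = ∫ t in (0:ℝ)..1, ⟪gradient F (x + t • v) - gradient F x, v⟫ := by
    simp_rw [inner_sub_left]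
    rw [intervalIntegral.integral_sub (hdc.intervalIntegrable 0 1)
      (intervalIntegrable_const), key]
    simp
  have hpt : ∀ t ∈ Set.Icc (0:ℝ) 1,
      |⟪gradient F (x + t • v) - gradient F x, v⟫| ≤ L * ‖v‖ ^ 2 * t := by
    intro t ht
    calc |⟪gradient F (x + t • v) - gradient F x, v⟫|
        ≤ ‖gradient F (x + t • v) - gradient F x‖ * ‖v‖ := abs_real_inner_le_norm _ _
      _ ≤ (L * ‖x + t • v - x‖) * ‖v‖ :=
          mul_le_mul_of_nonneg_right (hLip _ _) (norm_nonneg v)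
      _ = L * ‖v‖ ^ 2 * t := by
          rw [show x + t • v - x = t • v by abel, norm_smul, Real.norm_eq_abs,
            abs_of_nonneg ht.1]
          ring
  rw [heq]
  have habs : |∫ t in (0:ℝ)..1, ⟪gradient F (x + t • v) - gradient F x, v⟫|
      ≤ ∫ t in (0:ℝ)..1, |⟪gradient F (x + t • v) - gradient F x, v⟫| :=
    intervalIntegral.abs_integral_le_integral_abs zero_le_one
  have hcont2 : Continuous fun t : ℝ => |⟪gradient F (x + t • v) - gradient F x, v⟫| :=
    ((Continuous.inner ((hgradcont.comp (by continuity)).sub continuous_const)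
      continuous_const)).abs
  have hmono : (∫ t in (0:ℝ)..1, |⟪gradient F (x + t • v) - gradient F x, v⟫|)
      ≤ ∫ t in (0:ℝ)..1, L * ‖v‖ ^ 2 * t := by
    apply intervalIntegral.integral_mono_on zero_le_one (hcont2.intervalIntegrable 0 1)
      ((continuous_const.mul continuous_id).intervalIntegrable 0 1) hpt
  have hval : (∫ t in (0:ℝ)..1, L * ‖v‖ ^ 2 * t) = L / 2 * ‖v‖ ^ 2 := by
    rw [intervalIntegral.integral_const_mul, integral_id]
    ring
  linarith

set_option maxHeartbeats 1000000 in
/-- Descent lemma for the noisy SGD step under the first- and second-moment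
assumptions: if `⟨∇F(w), E[g]⟩ ≥ μ_F‖∇F(w)‖²` and
`E[‖g‖²] ≤ M_e + M_v/(Kb) + (M_E + M_V/(Kb))‖∇F(w)‖²`, then for any step size
`0 < η ≤ μ_F / (L(M_E + M_V/(Kb)))` we have
`E[F(w − η(g+n))] − F(w) ≤ −(ημ_F/2)‖∇F(w)‖² + Lτη²/(2K) + (Lη²/2)(M_e + M_v/(Kb))`. -/
theorem stmt1
    {E : Type*} [NormedAddCommGroup E] [InnerProductSpace ℝ E] [FiniteDimensional ℝ E]
    [MeasurableSpace E] [BorelSpace E]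
    {Ω : Type*} [MeasureSpace Ω] [IsProbabilityMeasure (ℙ : Measure Ω)]
    (F : E → ℝ) (hF : Differentiable ℝ F)
    (L : ℝ) (hL : 0 < L)
    (hLip : ∀ w w' : E, ‖gradient F w - gradient F w'‖ ≤ L * ‖w - w'‖)
    (g n : Ω → E)
    (hgn : IndepFun g n ℙ)
    (hg : MemLp g 2 ℙ) (hn : MemLp n 2 ℙ)
    (hn0 : (∫ ω, n ω) = 0)
    (τ K : ℝ) (hτ : 0 ≤ τ) (hK : 0 < K)
    (hn2 : (∫ ω, ‖n ω‖ ^ 2) = τ / K)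
    (w : E)
    (μF Me Mv ME MV b : ℝ)
    (hμF : 0 < μF) (hMe : 0 < Me) (hMv : 0 < Mv) (hME : 0 < ME) (hMV : 0 < MV) (hb : 0 < b)
    (hfirst : ⟪gradient F w, ∫ ω, g ω⟫ ≥ μF * ‖gradient F w‖ ^ 2)
    (hsecond : (∫ ω, ‖g ω‖ ^ 2) ≤
      Me + Mv / (K * b) + (ME + MV / (K * b)) * ‖gradient F w‖ ^ 2)
    (η : ℝ) (hη : 0 < η) (hηle : η ≤ μF / (L * (ME + MV / (K * b)))) :
    (∫ ω, F (w - η • (g ω + n ω))) - F w ≤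
      -(η * μF / 2) * ‖gradient F w‖ ^ 2 + L * τ * η ^ 2 / (2 * K)
        + (L * η ^ 2 / 2) * (Me + Mv / (K * b)) := by
  have quadBound : ∀ x v : E, |F (x + v) - F x - ⟪gradient F x, v⟫| ≤ L / 2 * ‖v‖ ^ 2 :=
    fun x v => stmt1_quadBound F hF L hL.le hLip x v
  set G := gradient F w with hG
  set u : Ω → E := fun ω => g ω + n ω with hu_def
  have hu : MemLp u 2 ℙ := hg.add hn
  have hg1 : Integrable g ℙ := hg.integrable one_le_two
  have hn1 : Integrable n ℙ := hn.integrable one_le_two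
  have hu1 : Integrable u ℙ := hg1.add hn1
  -- pointwise descent bound
  have hptabs : ∀ ω, |F (w - η • u ω) - F w - (-η * ⟪G, u ω⟫)|
      ≤ L / 2 * η ^ 2 * ‖u ω‖ ^ 2 := by
    intro ω
    have := quadBound w (-η • u ω)
    have h1 : w + -η • u ω = w - η • u ω := by
      rw [neg_smul]; abel
    have h2 : ⟪G, -η • u ω⟫ = -η * ⟪G, u ω⟫ := real_inner_smul_right _ _ _
    rw [h1, h2] at this
    calc |F (w - η • u ω) - F w - (-η * ⟪G, u ω⟫)| ≤ L / 2 * ‖(-η) • u ω‖ ^ 2 := this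
      _ = L / 2 * η ^ 2 * ‖u ω‖ ^ 2 := by
        rw [norm_smul, Real.norm_eq_abs, mul_pow, sq_abs]; ring
  -- integrabilities
  have hintGu : Integrable (fun ω => ⟪G, u ω⟫) ℙ := hu1.const_inner G
  have hintu2 : Integrable (fun ω => ‖u ω‖ ^ 2) ℙ :=
    (memLp_two_iff_integrable_sq_norm hu.1).mp hu
  have hintg2 : Integrable (fun ω => ‖g ω‖ ^ 2) ℙ :=
    (memLp_two_iff_integrable_sq_norm hg.1).mp hg
  have hintn2 : Integrable (fun ω => ‖n ω‖ ^ 2) ℙ :=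
    (memLp_two_iff_integrable_sq_norm hn.1).mp hn
  have hFm : AEStronglyMeasurable (fun ω => F (w - η • u ω)) ℙ := by
    have hc : Continuous fun z : E => F (w - η • z) :=
      hF.continuous.comp (continuous_const.sub (continuous_const.smul continuous_id))
    exact hc.comp_aestronglyMeasurable hu.1
  have hintD : Integrable (fun ω => F (w - η • u ω) - F w) ℙ := by
    apply Integrable.mono' (((hintGu.abs.const_mul η).add (hintu2.const_mul (L / 2 * η ^ 2))))
      (hFm.sub aestronglyMeasurable_const)
    filter_upwards with ω
    have h := hptabs ω
    have : |F (w - η • u ω) - F w| ≤ |F (w - η • u ω) - F w - (-η * ⟪G, u ω⟫)|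
        + |(-η * ⟪G, u ω⟫)| := by
      have := abs_sub_abs_le_abs_sub (F (w - η • u ω) - F w) (-η * ⟪G, u ω⟫)
      have h2 := abs_add_le (F (w - η • u ω) - F w - (-η * ⟪G, u ω⟫)) (-η * ⟪G, u ω⟫)
      calc |F (w - η • u ω) - F w|
          = |(F (w - η • u ω) - F w - (-η * ⟪G, u ω⟫)) + (-η * ⟪G, u ω⟫)| := by ring_nf
        _ ≤ _ := h2
    rw [Real.norm_eq_abs]
    calc |F (w - η • u ω) - F w| ≤ |F (w - η • u ω) - F w - (-η * ⟪G, u ω⟫)|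
        + |(-η * ⟪G, u ω⟫)| := this
      _ ≤ L / 2 * η ^ 2 * ‖u ω‖ ^ 2 + η * |⟪G, u ω⟫| := by
          rw [abs_mul, abs_neg, abs_of_pos hη]; linarith
      _ = η * |⟪G, u ω⟫| + L / 2 * η ^ 2 * ‖u ω‖ ^ 2 := by ring
  have hintF : Integrable (fun ω => F (w - η • u ω)) ℙ := by
    exact (hintD.add (integrable_const (F w))).congr
      (Filter.Eventually.of_forall fun ω => by simp)
  -- E⟪g,n⟫ = 0
  have hinner0 : (∫ ω, ⟪g ω, n ω⟫) = 0 := by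
    classical
    set bb := stdOrthonormalBasis ℝ E
    have hrepr : ∀ ω, ⟪g ω, n ω⟫ = ∑ i, ⟪bb i, g ω⟫ * ⟪bb i, n ω⟫ := by
      intro ω
      calc ⟪g ω, n ω⟫ = ⟪∑ i, bb.repr (g ω) i • bb i, n ω⟫ := by rw [bb.sum_repr]
        _ = ∑ i, bb.repr (g ω) i * ⟪bb i, n ω⟫ := by
            rw [sum_inner]; simp [real_inner_smul_left]
        _ = ∑ i, ⟪bb i, g ω⟫ * ⟪bb i, n ω⟫ := by simp [bb.repr_apply_apply]
    have hmeas : ∀ i, Measurable fun z : E => ⟪bb i, z⟫ := fun i =>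
      (continuous_const.inner continuous_id).measurable
    have hterm : ∀ i, (∫ ω, ⟪bb i, g ω⟫ * ⟪bb i, n ω⟫) = 0 := by
      intro i
      have hind : IndepFun (fun ω => ⟪bb i, g ω⟫) (fun ω => ⟪bb i, n ω⟫) ℙ :=
        hgn.comp (hmeas i) (hmeas i)
      have hmul : (∫ ω, ⟪bb i, g ω⟫ * ⟪bb i, n ω⟫)
          = (∫ ω, ⟪bb i, g ω⟫) * ∫ ω, ⟪bb i, n ω⟫ :=
        hind.integral_fun_mul_eq_mul_integral (hg1.const_inner (bb i)).aestronglyMeasurable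
          (hn1.const_inner (bb i)).aestronglyMeasurable
      rw [hmul]
      have : (∫ ω, ⟪bb i, n ω⟫) = ⟪bb i, ∫ ω, n ω⟫ := integral_inner hn1 (bb i)
      rw [this, hn0, inner_zero_right, mul_zero]
    calc (∫ ω, ⟪g ω, n ω⟫) = ∫ ω, ∑ i, ⟪bb i, g ω⟫ * ⟪bb i, n ω⟫ := by
          congr 1; funext ω; exact hrepr ω
      _ = ∑ i, ∫ ω, ⟪bb i, g ω⟫ * ⟪bb i, n ω⟫ := by
          apply integral_finset_sum
          intro i _
          exact (hgn.comp (hmeas i) (hmeas i)).integrable_mul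
            (hg1.const_inner (bb i)) (hn1.const_inner (bb i))
      _ = 0 := by
          apply Finset.sum_eq_zero; intro i _; exact hterm i
  have hintgn : Integrable (fun ω => ⟪g ω, n ω⟫) ℙ := by
    have hb : ∀ ω, ‖⟪g ω, n ω⟫‖ ≤ (1:ℝ)/2 * ‖g ω‖ ^ 2 + 1/2 * ‖n ω‖ ^ 2 := by
      intro ω
      rw [Real.norm_eq_abs]
      have h1 := abs_real_inner_le_norm (g ω) (n ω)
      nlinarith [sq_nonneg (‖g ω‖ - ‖n ω‖), norm_nonneg (g ω), norm_nonneg (n ω)]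
    exact Integrable.mono' ((hintg2.const_mul (1/2)).add (hintn2.const_mul (1/2)))
      (hg.1.inner hn.1) (Filter.Eventually.of_forall hb)
  -- second moment of u
  have hu2 : (∫ ω, ‖u ω‖ ^ 2) = (∫ ω, ‖g ω‖ ^ 2) + τ / K := by
    have hexp : ∀ ω, ‖u ω‖ ^ 2 = ‖g ω‖ ^ 2 + 2 * ⟪g ω, n ω⟫ + ‖n ω‖ ^ 2 := fun ω =>
      norm_add_sq_real _ _
    calc (∫ ω, ‖u ω‖ ^ 2) = ∫ ω, (‖g ω‖ ^ 2 + 2 * ⟪g ω, n ω⟫ + ‖n ω‖ ^ 2) := by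
          congr 1; funext ω; exact hexp ω
      _ = (∫ ω, ‖g ω‖ ^ 2) + 2 * (∫ ω, ⟪g ω, n ω⟫) + ∫ ω, ‖n ω‖ ^ 2 := by
          have hB : Integrable (fun ω => 2 * ⟪g ω, n ω⟫) ℙ := hintgn.const_mul 2
          have hA : Integrable (fun ω => ‖g ω‖ ^ 2 + 2 * ⟪g ω, n ω⟫) ℙ := hintg2.add hB
          rw [integral_add hA hintn2, integral_add hintg2 hB, integral_const_mul _ _]
      _ = (∫ ω, ‖g ω‖ ^ 2) + τ / K := by rw [hinner0, hn2]; ring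
  -- first moment of u
  have huint : (∫ ω, ⟪G, u ω⟫) = ⟪G, ∫ ω, g ω⟫ := by
    rw [integral_inner hu1 G]
    have : (∫ ω, u ω) = (∫ ω, g ω) + ∫ ω, n ω := integral_add hg1 hn1
    rw [this, hn0, add_zero]
  -- main integral inequality
  have hmain : (∫ ω, F (w - η • u ω)) - F w
      ≤ -η * ⟪G, ∫ ω, g ω⟫ + L / 2 * η ^ 2 * ((∫ ω, ‖g ω‖ ^ 2) + τ / K) := by
    have hle : (∫ ω, (F (w - η • u ω) - F w))
        ≤ ∫ ω, (-η * ⟪G, u ω⟫ + L / 2 * η ^ 2 * ‖u ω‖ ^ 2) := by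
      apply integral_mono hintD ((hintGu.const_mul (-η)).add (hintu2.const_mul (L / 2 * η ^ 2)))
      intro ω
      have := (abs_le.mp (hptabs ω)).2
      show F (w - η • u ω) - F w ≤ -η * ⟪G, u ω⟫ + L / 2 * η ^ 2 * ‖u ω‖ ^ 2
      linarith
    have heq1 : (∫ ω, (F (w - η • u ω) - F w)) = (∫ ω, F (w - η • u ω)) - F w := by
      rw [integral_sub hintF (integrable_const _), integral_const]
      simp
    have heq2 : (∫ ω, (-η * ⟪G, u ω⟫ + L / 2 * η ^ 2 * ‖u ω‖ ^ 2))
        = -η * ⟪G, ∫ ω, g ω⟫ + L / 2 * η ^ 2 * ((∫ ω, ‖g ω‖ ^ 2) + τ / K) := by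
      have hA : Integrable (fun ω => -η * ⟪G, u ω⟫) ℙ := hintGu.const_mul (-η)
      have hB : Integrable (fun ω => L / 2 * η ^ 2 * ‖u ω‖ ^ 2) ℙ :=
        hintu2.const_mul (L / 2 * η ^ 2)
      rw [integral_add hA hB, integral_const_mul (-η) fun ω => ⟪G, u ω⟫,
        integral_const_mul (L / 2 * η ^ 2) fun ω => ‖u ω‖ ^ 2, huint, hu2]
    rw [heq1, heq2] at hle
    exact hle
  -- final arithmetic
  obtain ⟨C, hC⟩ : ∃ C : ℝ, C = ME + MV / (K * b) := ⟨_, rfl⟩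
  rw [← hC] at hηle hsecond
  have hCpos : 0 < C := by rw [hC]; positivity
  have hηLC : η * (L * C) ≤ μF := by
    rw [le_div_iff₀ (by positivity)] at hηle
    linarith
  have hGsq : (0:ℝ) ≤ ‖G‖ ^ 2 := sq_nonneg _
  have h2 : L / 2 * η ^ 2 * ((∫ ω, ‖g ω‖ ^ 2) + τ / K)
      ≤ L / 2 * η ^ 2 * (Me + Mv / (K * b) + C * ‖G‖ ^ 2 + τ / K) := by
    apply mul_le_mul_of_nonneg_left _ (by positivity)
    linarith
  have h1 : -η * ⟪G, ∫ ω, g ω⟫ ≤ -η * (μF * ‖G‖ ^ 2) := by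
    apply neg_le_neg at hfirst
    nlinarith
  have h3 : L / 2 * η ^ 2 * (C * ‖G‖ ^ 2) ≤ η * μF / 2 * ‖G‖ ^ 2 := by
    have hkey := mul_le_mul_of_nonneg_left hηLC (mul_nonneg hη.le hGsq)
    nlinarith [hkey]
  calc (∫ ω, F (w - η • u ω)) - F w
      ≤ -η * ⟪G, ∫ ω, g ω⟫ + L / 2 * η ^ 2 * ((∫ ω, ‖g ω‖ ^ 2) + τ / K) := hmain
    _ ≤ -(η * μF / 2) * ‖G‖ ^ 2 + L * τ * η ^ 2 / (2 * K)
        + (L * η ^ 2 / 2) * (Me + Mv / (K * b)) := by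
          have hexp : L / 2 * η ^ 2 * (Me + Mv / (K * b) + C * ‖G‖ ^ 2 + τ / K)
              = L * η ^ 2 / 2 * (Me + Mv / (K * b)) + L / 2 * η ^ 2 * (C * ‖G‖ ^ 2)
                + L * τ * η ^ 2 / (2 * K) := by
            field_simp
          linarith
end

section
/- Let E be a finite-dimensional real inner product space, F : E → ℝ differentiable with ∇F L-Lipschitz (L > 0), and let g, n : Ω → E be independent square-integrable random vectors with E[n] = 0 and E[‖n‖²] = τ/K (τ ≥ 0, K > 0). Fix w ∈ E and a constant μ_G > 0, and assume ⟨∇F(w), E[g]⟩ ≥ μ_G·E[‖g‖²]. Then for every step size η with 0 < η ≤ μ_G/L, it holds that E[F(w − η(g + n))] − F(w) ≤ −(ημ_G/2)·E[‖g − E[g]‖²] + Lτη²/(2K). -/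
open MeasureTheory ProbabilityTheory
open scoped RealInnerProductSpace


lemma descent_aux {E : Type*} [NormedAddCommGroup E] [InnerProductSpace ℝ E]
    [CompleteSpace E]
    (F : E → ℝ) (hF : Differentiable ℝ F) (L : ℝ)
    (hLip : ∀ w w' : E, ‖gradient F w - gradient F w'‖ ≤ L * ‖w - w'‖)
    (x u : E) :
    |F (x + u) - F x - ⟪gradient F x, u⟫| ≤ L / 2 * ‖u‖ ^ 2 := by
  have hline : ∀ t : ℝ, HasDerivAt (fun t : ℝ => x + t • u) u t := by
    intro t
    simpa using ((hasDerivAt_id t).smul_const u).const_add x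
  have hφ : ∀ t : ℝ, HasDerivAt (fun t : ℝ => F (x + t • u))
      ⟪gradient F (x + t • u), u⟫ t := by
    intro t
    have h1 : HasFDerivAt F (InnerProductSpace.toDual ℝ E (gradient F (x + t • u)))
        (x + t • u) := (hF _).hasGradientAt
    have := h1.comp_hasDerivAt t (hline t)
    simpa [InnerProductSpace.toDual_apply_apply, Function.comp_def] using this
  set C := ⟪gradient F x, u⟫ with hC
  have hbound : ∀ t ∈ Set.Ioo (0:ℝ) 1,
      |⟪gradient F (x + t • u), u⟫ - C| ≤ L * ‖u‖ ^ 2 * t := by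
    intro t ht
    have h1 : ⟪gradient F (x + t • u), u⟫ - C
        = ⟪gradient F (x + t • u) - gradient F x, u⟫ := by
      rw [hC, inner_sub_left]
    rw [h1]
    calc |⟪gradient F (x + t • u) - gradient F x, u⟫|
        ≤ ‖gradient F (x + t • u) - gradient F x‖ * ‖u‖ := abs_real_inner_le_norm _ _
      _ ≤ (L * ‖(x + t • u) - x‖) * ‖u‖ :=
          mul_le_mul_of_nonneg_right (hLip _ _) (norm_nonneg u)
      _ = L * ‖u‖ ^ 2 * t := by
          have : (x + t • u) - x = t • u := by abel
          rw [this, norm_smul, Real.norm_eq_abs, abs_of_pos ht.1]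
          ring
  have upper : F (x + u) - F x - C ≤ L / 2 * ‖u‖ ^ 2 := by
    set ψ : ℝ → ℝ := fun t => F (x + t • u) - t * C - L * ‖u‖ ^ 2 / 2 * t ^ 2 with hψ
    have hψd : ∀ t : ℝ, HasDerivAt ψ
        (⟪gradient F (x + t • u), u⟫ - C - L * ‖u‖ ^ 2 * t) t := by
      intro t
      have h2 : HasDerivAt (fun s : ℝ => s * C) C t := by
        simpa using (hasDerivAt_id t).mul_const C
      have h3 : HasDerivAt (fun s : ℝ => L * ‖u‖ ^ 2 / 2 * s ^ 2)
          (L * ‖u‖ ^ 2 / 2 * (2 * t)) t := by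
        simpa using (hasDerivAt_pow 2 t).const_mul (L * ‖u‖ ^ 2 / 2)
      have := ((hφ t).sub h2).sub h3
      exact this.congr_deriv (by ring)
    have hanti : AntitoneOn ψ (Set.Icc 0 1) := by
      apply antitoneOn_of_deriv_nonpos (convex_Icc 0 1)
      · exact fun t _ => (hψd t).continuousAt.continuousWithinAt
      · exact fun t _ => (hψd t).differentiableAt.differentiableWithinAt
      · intro t ht
        rw [interior_Icc] at ht
        rw [(hψd t).deriv]
        have := (abs_le.mp (hbound t ht)).2
        linarith
    have h01 := hanti (Set.mem_Icc.mpr ⟨le_rfl, zero_le_one⟩)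
      (Set.mem_Icc.mpr ⟨zero_le_one, le_rfl⟩) zero_le_one
    simp only [hψ, zero_smul, add_zero, one_smul, zero_mul, zero_pow, mul_zero, sub_zero,
      one_mul, one_pow, mul_one] at h01
    linarith
  have lower : -(L / 2 * ‖u‖ ^ 2) ≤ F (x + u) - F x - C := by
    set χ : ℝ → ℝ := fun t => F (x + t • u) - t * C + L * ‖u‖ ^ 2 / 2 * t ^ 2 with hχ
    have hχd : ∀ t : ℝ, HasDerivAt χ
        (⟪gradient F (x + t • u), u⟫ - C + L * ‖u‖ ^ 2 * t) t := by
      intro t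
      have h2 : HasDerivAt (fun s : ℝ => s * C) C t := by
        simpa using (hasDerivAt_id t).mul_const C
      have h3 : HasDerivAt (fun s : ℝ => L * ‖u‖ ^ 2 / 2 * s ^ 2)
          (L * ‖u‖ ^ 2 / 2 * (2 * t)) t := by
        simpa using (hasDerivAt_pow 2 t).const_mul (L * ‖u‖ ^ 2 / 2)
      have := ((hφ t).sub h2).add h3
      exact this.congr_deriv (by ring)
    have hmono : MonotoneOn χ (Set.Icc 0 1) := by
      apply monotoneOn_of_deriv_nonneg (convex_Icc 0 1)
      · exact fun t _ => (hχd t).continuousAt.continuousWithinAt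
      · exact fun t _ => (hχd t).differentiableAt.differentiableWithinAt
      · intro t ht
        rw [interior_Icc] at ht
        rw [(hχd t).deriv]
        have := (abs_le.mp (hbound t ht)).1
        linarith
    have h01 := hmono (Set.mem_Icc.mpr ⟨le_rfl, zero_le_one⟩)
      (Set.mem_Icc.mpr ⟨zero_le_one, le_rfl⟩) zero_le_one
    simp only [hχ, zero_smul, add_zero, one_smul, zero_mul, zero_pow, mul_zero, sub_zero,
      one_mul, one_pow, mul_one] at h01
    linarith
  exact abs_le.mpr ⟨lower, upper⟩

/-- Descent lemma in terms of the gradient variance: if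
`⟨∇F(w), E[g]⟩ ≥ μ_G E[‖g‖²]`, then for every step size `0 < η ≤ μ_G/L`,
`E[F(w − η(g+n))] − F(w) ≤ −(ημ_G/2) E[‖g − E[g]‖²] + Lτη²/(2K)`. -/
theorem stmt2
    {E : Type*} [NormedAddCommGroup E] [InnerProductSpace ℝ E] [FiniteDimensional ℝ E]
    [MeasurableSpace E] [BorelSpace E]
    {Ω : Type*} [MeasureSpace Ω] [IsProbabilityMeasure (ℙ : Measure Ω)]
    (F : E → ℝ) (hF : Differentiable ℝ F)
    (L : ℝ) (hL : 0 < L)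
    (hLip : ∀ w w' : E, ‖gradient F w - gradient F w'‖ ≤ L * ‖w - w'‖)
    (g n : Ω → E)
    (hgn : IndepFun g n ℙ)
    (hg : MemLp g 2 ℙ) (hn : MemLp n 2 ℙ)
    (hn0 : (∫ ω, n ω) = 0)
    (τ K : ℝ) (hτ : 0 ≤ τ) (hK : 0 < K)
    (hn2 : (∫ ω, ‖n ω‖ ^ 2) = τ / K)
    (w : E)
    (μG : ℝ) (hμG : 0 < μG)
    (hfirst : ⟪gradient F w, ∫ ω, g ω⟫ ≥ μG * ∫ ω, ‖g ω‖ ^ 2)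
    (η : ℝ) (hη : 0 < η) (hηle : η ≤ μG / L) :
    (∫ ω, F (w - η • (g ω + n ω))) - F w ≤
      -(η * μG / 2) * (∫ ω, ‖g ω - ∫ ω', g ω'‖ ^ 2) + L * τ * η ^ 2 / (2 * K) := by
  have h12 : (1:ENNReal) ≤ 2 := one_le_two
  set G := gradient F w with hG
  set v : Ω → E := fun ω => g ω + n ω with hv
  have hv2 : MemLp v 2 ℙ := hg.add hn
  have hgInt : Integrable g ℙ := hg.integrable h12
  have hnInt : Integrable n ℙ := hn.integrable h12
  have hvInt : Integrable v ℙ := hgInt.add hnInt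
  have hvsq : Integrable (fun ω => ‖v ω‖ ^ 2) ℙ :=
    (memLp_two_iff_integrable_sq_norm hv2.1).mp hv2
  have hgsq : Integrable (fun ω => ‖g ω‖ ^ 2) ℙ :=
    (memLp_two_iff_integrable_sq_norm hg.1).mp hg
  have hnsq : Integrable (fun ω => ‖n ω‖ ^ 2) ℙ :=
    (memLp_two_iff_integrable_sq_norm hn.1).mp hn
  -- cross term
  have hcross_int : Integrable (fun ω => ⟪g ω, n ω⟫) ℙ := by
    have hrepr : (fun ω => ⟪g ω, n ω⟫)
        = fun ω => (‖v ω‖ ^ 2 - ‖g ω‖ ^ 2 - ‖n ω‖ ^ 2) / 2 := by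
      funext ω
      have := norm_add_sq_real (g ω) (n ω)
      simp only [hv]
      linarith
    rw [hrepr]
    exact ((hvsq.sub hgsq).sub hnsq).div_const 2
  have hcross : (∫ ω, ⟪g ω, n ω⟫) = 0 := by
    let b := stdOrthonormalBasis ℝ E
    have hrep : ∀ ω, ⟪g ω, n ω⟫ = ∑ i, ⟪g ω, b i⟫ * ⟪b i, n ω⟫ :=
      fun ω => (b.sum_inner_mul_inner _ _).symm
    have hterm : ∀ i, (∫ ω, ⟪g ω, b i⟫ * ⟪b i, n ω⟫) = 0 := by
      intro i
      have hind : IndepFun (fun ω => ⟪g ω, b i⟫) (fun ω => ⟪b i, n ω⟫) ℙ :=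
        hgn.comp (continuous_id.inner continuous_const).measurable
          (continuous_const.inner continuous_id).measurable
      have h1 : Integrable (fun ω => ⟪g ω, b i⟫) ℙ := (hg.inner_const (b i)).integrable h12
      have h2 : Integrable (fun ω => ⟪b i, n ω⟫) ℙ := (hn.const_inner (b i)).integrable h12
      have := hind.integral_fun_mul_eq_mul_integral h1.1 h2.1
      have hzero : (∫ ω, ⟪b i, n ω⟫) = 0 := by
        rw [integral_inner hnInt (b i), hn0, inner_zero_right]
      calc (∫ ω, ⟪g ω, b i⟫ * ⟪b i, n ω⟫)
          = (∫ ω, ⟪g ω, b i⟫) * (∫ ω, ⟪b i, n ω⟫) := this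
        _ = 0 := by rw [hzero, mul_zero]
    calc (∫ ω, ⟪g ω, n ω⟫) = ∫ ω, ∑ i, ⟪g ω, b i⟫ * ⟪b i, n ω⟫ := by simp_rw [hrep]
      _ = ∑ i, ∫ ω, ⟪g ω, b i⟫ * ⟪b i, n ω⟫ := by
          refine integral_finset_sum _ fun i _ => ?_
          have hind : IndepFun (fun ω => ⟪g ω, b i⟫) (fun ω => ⟪b i, n ω⟫) ℙ :=
            hgn.comp (continuous_id.inner continuous_const).measurable
              (continuous_const.inner continuous_id).measurable
          exact hind.integrable_mul ((hg.inner_const (b i)).integrable h12)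
            ((hn.const_inner (b i)).integrable h12)
      _ = 0 := by simp [hterm]
  have hIv : (∫ ω, v ω) = ∫ ω, g ω := by
    simp only [hv]
    rw [integral_add hgInt hnInt, hn0, add_zero]
  have hIvsq : (∫ ω, ‖v ω‖ ^ 2) = (∫ ω, ‖g ω‖ ^ 2) + τ / K := by
    have hexp : (fun ω => ‖v ω‖ ^ 2)
        = fun ω => ‖g ω‖ ^ 2 + 2 * ⟪g ω, n ω⟫ + ‖n ω‖ ^ 2 := by
      funext ω; exact norm_add_sq_real _ _
    have i1 : Integrable (fun ω => ‖g ω‖ ^ 2 + 2 * ⟪g ω, n ω⟫) ℙ :=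
      hgsq.add (hcross_int.const_mul 2)
    rw [hexp, integral_add i1 hnsq,
      integral_add hgsq (hcross_int.const_mul 2), integral_const_mul, hcross, hn2]
    ring
  -- pointwise descent
  have key : ∀ ω, |F (w - η • (g ω + n ω)) - (F w - η * ⟪G, v ω⟫)|
      ≤ L / 2 * η ^ 2 * ‖v ω‖ ^ 2 := by
    intro ω
    have h := descent_aux F hF L hLip w (-(η • v ω))
    have e1 : w + -(η • v ω) = w - η • (g ω + n ω) := by
      simp only [hv]; abel
    have e2 : ⟪G, -(η • v ω)⟫ = -(η * ⟪G, v ω⟫) := by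
      rw [inner_neg_right, real_inner_smul_right]
    have e3 : ‖-(η • v ω)‖ ^ 2 = η ^ 2 * ‖v ω‖ ^ 2 := by
      rw [norm_neg, norm_smul, Real.norm_eq_abs, mul_pow, sq_abs]
    rw [e1, e2, e3] at h
    calc |F (w - η • (g ω + n ω)) - (F w - η * ⟪G, v ω⟫)|
        = |F (w - η • (g ω + n ω)) - F w - -(η * ⟪G, v ω⟫)| := by ring_nf
      _ ≤ L / 2 * (η ^ 2 * ‖v ω‖ ^ 2) := h
      _ = L / 2 * η ^ 2 * ‖v ω‖ ^ 2 := by ring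
  have hvmeas : AEStronglyMeasurable (fun ω => w - η • (g ω + n ω)) ℙ := by
    exact aestronglyMeasurable_const.sub (hv2.1.const_smul η)
  have hFmeas : AEStronglyMeasurable (fun ω => F (w - η • (g ω + n ω))) ℙ :=
    hF.continuous.comp_aestronglyMeasurable hvmeas
  have hlin_int : Integrable (fun ω => ⟪G, v ω⟫) ℙ := hvInt.const_inner G
  have hFint : Integrable (fun ω => F (w - η • (g ω + n ω))) ℙ := by
    refine Integrable.mono'
      (((((integrable_const (F w)).sub (hlin_int.const_mul η)).abs).add
        (hvsq.const_mul (L / 2 * η ^ 2)))) hFmeas ?_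
    filter_upwards with ω
    have h := key ω
    have := abs_sub_abs_le_abs_sub (F (w - η • (g ω + n ω))) (F w - η * ⟪G, v ω⟫)
    simp only [Real.norm_eq_abs]
    calc |F (w - η • (g ω + n ω))|
        ≤ |F w - η * ⟪G, v ω⟫| + |F (w - η • (g ω + n ω)) - (F w - η * ⟪G, v ω⟫)| := by
          have := abs_add_le (F w - η * ⟪G, v ω⟫)
            (F (w - η • (g ω + n ω)) - (F w - η * ⟪G, v ω⟫))
          simp only [add_sub_cancel] at this
          linarith
      _ ≤ |F w - η * ⟪G, v ω⟫| + L / 2 * η ^ 2 * ‖v ω‖ ^ 2 := by linarith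
  have hBint : Integrable (fun ω => F w - η * ⟪G, v ω⟫ + L / 2 * η ^ 2 * ‖v ω‖ ^ 2) ℙ :=
    ((integrable_const (F w)).sub (hlin_int.const_mul η)).add (hvsq.const_mul (L / 2 * η ^ 2))
  have hmain : (∫ ω, F (w - η • (g ω + n ω)))
      ≤ F w - η * ⟪G, ∫ ω, g ω⟫ + L / 2 * η ^ 2 * ((∫ ω, ‖g ω‖ ^ 2) + τ / K) := by
    have h1 : (∫ ω, F (w - η • (g ω + n ω)))
        ≤ ∫ ω, (F w - η * ⟪G, v ω⟫ + L / 2 * η ^ 2 * ‖v ω‖ ^ 2) := by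
      refine integral_mono hFint hBint fun ω => ?_
      have := (abs_le.mp (key ω)).2
      linarith
    have h2 : (∫ ω, (F w - η * ⟪G, v ω⟫ + L / 2 * η ^ 2 * ‖v ω‖ ^ 2))
        = F w - η * ⟪G, ∫ ω, g ω⟫ + L / 2 * η ^ 2 * ((∫ ω, ‖g ω‖ ^ 2) + τ / K) := by
      have j1 : Integrable (fun ω => F w - η * ⟪G, v ω⟫) ℙ :=
        (integrable_const (F w)).sub (hlin_int.const_mul η)
      have j2 : Integrable (fun ω => L / 2 * η ^ 2 * ‖v ω‖ ^ 2) ℙ :=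
        hvsq.const_mul (L / 2 * η ^ 2)
      rw [integral_add j1 j2,
        integral_sub (integrable_const (F w)) (hlin_int.const_mul η),
        integral_const, integral_const_mul, integral_const_mul,
        integral_inner hvInt G, hIv, hIvsq]
      simp [measure_univ]
    linarith [h2 ▸ h1]
  -- variance inequality
  set m := ∫ ω', g ω' with hm
  have hvar : (∫ ω, ‖g ω - m‖ ^ 2) ≤ ∫ ω, ‖g ω‖ ^ 2 := by
    have hexp : (fun ω => ‖g ω - m‖ ^ 2)
        = fun ω => ‖g ω‖ ^ 2 - 2 * ⟪m, g ω⟫ + ‖m‖ ^ 2 := by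
      funext ω
      rw [norm_sub_sq_real, real_inner_comm]
    have hint2 : Integrable (fun ω => 2 * ⟪m, g ω⟫) ℙ := (hgInt.const_inner m).const_mul 2
    have k1 : Integrable (fun ω => ‖g ω‖ ^ 2 - 2 * ⟪m, g ω⟫) ℙ := hgsq.sub hint2
    rw [hexp, integral_add k1 (integrable_const (‖m‖ ^ 2)),
      integral_sub hgsq hint2, integral_const_mul, integral_inner hgInt m, integral_const]
    have : ⟪m, m⟫ = ‖m‖ ^ 2 := real_inner_self_eq_norm_sq m
    simp only [measure_univ, probReal_univ, ENNReal.toReal_one, one_smul, smul_eq_mul, one_mul]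
    rw [this]
    nlinarith [sq_nonneg ‖m‖]
  have hA : (0:ℝ) ≤ ∫ ω, ‖g ω‖ ^ 2 := integral_nonneg fun ω => sq_nonneg _
  have hVar0 : (0:ℝ) ≤ ∫ ω, ‖g ω - m‖ ^ 2 := integral_nonneg fun ω => sq_nonneg _
  have hLη : L * η ≤ μG := by
    rw [le_div_iff₀ hL] at hηle; linarith
  have e1 : η * (μG * ∫ ω, ‖g ω‖ ^ 2) ≤ η * ⟪G, m⟫ :=
    mul_le_mul_of_nonneg_left hfirst hη.le
  have e2 : L / 2 * η ^ 2 * (∫ ω, ‖g ω‖ ^ 2) ≤ η * μG / 2 * (∫ ω, ‖g ω‖ ^ 2) := by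
    apply mul_le_mul_of_nonneg_right _ hA
    nlinarith
  have e3 : η * μG / 2 * (∫ ω, ‖g ω - m‖ ^ 2) ≤ η * μG / 2 * (∫ ω, ‖g ω‖ ^ 2) :=
    mul_le_mul_of_nonneg_left hvar (by positivity)
  have e4 : L / 2 * η ^ 2 * (τ / K) = L * τ * η ^ 2 / (2 * K) := by
    field_simp
  linarith
end

section
/- Let E be a finite-dimensional real inner product space, F : E → ℝ differentiable with ∇F L-Lipschitz (L > 0), and let g, n : Ω → E be independent square-integrable random vectors with E[n] = 0 and E[‖n‖²] = τ/K (τ ≥ 0, K > 0). Fix w ∈ E and constants μ_F, M_e, M_v, M_E, M_V > 0, δ ≥ 0, b > 0, and a real number F* such that ‖∇F(w)‖² ≥ 2δ(F(w) − F*) and F(w) ≥ F*. Assume ⟨∇F(w), E[g]⟩ ≥ μ_F‖∇F(w)‖² and E[‖g‖²] ≤ M_e + M_v/(Kb) + (M_E + M_V/(Kb))‖∇F(w)‖². Then for every η with 0 < η ≤ μ_F / (L(M_E + M_V/(Kb))), writing γ = F(w) − F*, it holds that E[F(w − η(g + n))] − F(w) ≤ −ημ_F δ γ + Lτη²/(2K)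 + (Lη²/2)(M_e + M_v/(Kb)). -/
open MeasureTheory ProbabilityTheory
open scoped RealInnerProductSpace

/-! Lipschitz continuity of `∇F` gives the two-sided quadratic bound
`|F (w - u) - F w + ⟪∇F w, u⟫| ≤ L/2 ‖u‖²`, so `F (w - u)` is integrable for square-integrable `u`
and `E[F (w - u)] ≤ F w - ⟪∇F w, E u⟫ + L/2 E‖u‖²`. For `u = η (g + n)` the noise drops out of the
linear term because `E n = 0`, and independence kills the cross term of `E‖g + n‖²`, leaving
`E‖g‖² + τ/K`. The step-size bound makes the curvature term `(Lη²/2)(M_E + M_V/(Kb))‖∇F w‖²` at most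
half of the first-order gain `ημ_F‖∇F w‖²`, and the PL inequality turns the remaining half into
`ημ_F δ γ`. -/

section LipschitzGradient

variable {E : Type*} [NormedAddCommGroup E] [InnerProductSpace ℝ E] [CompleteSpace E]
  {F : E → ℝ} {L : ℝ}

theorem hasDerivAt_comp_add_smul_gradient (hF : Differentiable ℝ F) (x v : E) (t : ℝ) :
    HasDerivAt (fun t : ℝ => F (x + t • v)) ⟪gradient F (x + t • v), v⟫ t := by
  have hline : HasDerivAt (fun t : ℝ => x + t • v) v t := by
    simpa using ((hasDerivAt_id t).smul_const v).const_add x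
  rw [inner_gradient_left]
  exact (hF _).hasFDerivAt.comp_hasDerivAt t hline

theorem abs_sub_sub_inner_gradient_le (hF : Differentiable ℝ F)
    (hLip : ∀ x y, ‖gradient F x - gradient F y‖ ≤ L * ‖x - y‖) (x y : E) :
    |F y - F x - ⟪gradient F x, y - x⟫| ≤ L / 2 * ‖y - x‖ ^ 2 := by
  set v := y - x
  let r : ℝ → ℝ := fun t => F (x + t • v) - F x - t * ⟪gradient F x, v⟫
  have hr : ∀ t, HasDerivAt r ⟪gradient F (x + t • v) - gradient F x, v⟫ t := fun t => by
    rw [inner_sub_left]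
    exact (((hasDerivAt_comp_add_smul_gradient hF x v t).sub_const _).sub
      ((hasDerivAt_id t).mul_const _)).congr_deriv (by simp)
  have hB : ∀ t, HasDerivAt (fun t => L / 2 * t ^ 2 * ‖v‖ ^ 2) (L * t * ‖v‖ ^ 2) t := fun t =>
    (((hasDerivAt_pow 2 t).const_mul (L / 2)).mul_const _).congr_deriv (by ring)
  have hbound : ∀ t ∈ Set.Ico (0 : ℝ) 1,
      ‖⟪gradient F (x + t • v) - gradient F x, v⟫‖ ≤ L * t * ‖v‖ ^ 2 := fun t ht => by
    calc ‖⟪gradient F (x + t • v) - gradient F x, v⟫‖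
        ≤ ‖gradient F (x + t • v) - gradient F x‖ * ‖v‖ := norm_inner_le_norm _ _
      _ ≤ L * ‖x + t • v - x‖ * ‖v‖ := by gcongr; exact hLip _ _
      _ = L * t * ‖v‖ ^ 2 := by
        rw [add_sub_cancel_left, norm_smul, Real.norm_of_nonneg ht.1]; ring
  have := image_norm_le_of_norm_deriv_right_le_deriv_boundary
    (fun t _ => (hr t).continuousAt.continuousWithinAt) (fun t _ => (hr t).hasDerivWithinAt)
    (by simp [r]) hB hbound (Set.right_mem_Icc.2 zero_le_one)
  simpa [r, v] using this

variable {Ω : Type*} [MeasurableSpace Ω] {μ : Measure Ω}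

theorem integrable_comp_sub_of_lipschitz_gradient [IsFiniteMeasure μ] (hF : Differentiable ℝ F)
    (hLip : ∀ x y, ‖gradient F x - gradient F y‖ ≤ L * ‖x - y‖) (x : E) {u : Ω → E}
    (hu : MemLp u 2 μ) : Integrable (fun ω => F (x - u ω)) μ := by
  have hu1 : Integrable u μ := hu.integrable one_le_two
  refine (((integrable_const |F x|).add (hu1.norm.const_mul ‖gradient F x‖)).add
    ((hu.integrable_norm_pow two_ne_zero).const_mul (|L| / 2))).mono'
    (hF.continuous.comp_aestronglyMeasurable (aestronglyMeasurable_const.sub hu1.1)) ?_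
  refine Filter.Eventually.of_forall fun ω => ?_
  have hTaylor := abs_sub_sub_inner_gradient_le hF hLip x (x - u ω)
  rw [sub_sub_cancel_left, norm_neg] at hTaylor
  calc ‖F (x - u ω)‖
      = |F x + ⟪gradient F x, -u ω⟫ + (F (x - u ω) - F x - ⟪gradient F x, -u ω⟫)| := by
        rw [Real.norm_eq_abs]; ring_nf
    _ ≤ |F x| + |⟪gradient F x, -u ω⟫| + |F (x - u ω) - F x - ⟪gradient F x, -u ω⟫| :=
        abs_add_three _ _ _
    _ ≤ |F x| + ‖gradient F x‖ * ‖u ω‖ + |L| / 2 * ‖u ω‖ ^ 2 := by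
        gcongr
        · simpa using abs_real_inner_le_norm (gradient F x) (-u ω)
        · exact hTaylor.trans (by gcongr; exact le_abs_self L)

theorem integral_comp_sub_le_of_lipschitz_gradient [IsProbabilityMeasure μ]
    (hF : Differentiable ℝ F)
    (hLip : ∀ x y, ‖gradient F x - gradient F y‖ ≤ L * ‖x - y‖) (x : E) {u : Ω → E}
    (hu : MemLp u 2 μ) :
    ∫ ω, F (x - u ω) ∂μ ≤
      F x - ⟪gradient F x, ∫ ω, u ω ∂μ⟫ + L / 2 * ∫ ω, ‖u ω‖ ^ 2 ∂μ := by
  have hu1 : Integrable u μ := hu.integrable one_le_two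
  have hinner : Integrable (fun ω => ⟪gradient F x, u ω⟫) μ := hu1.const_inner _
  have hlin : Integrable (fun ω => F x - ⟪gradient F x, u ω⟫) μ := (integrable_const _).sub hinner
  have hsq : Integrable (fun ω => L / 2 * ‖u ω‖ ^ 2) μ :=
    (hu.integrable_norm_pow two_ne_zero).const_mul _
  have hdescent : ∀ ω, F (x - u ω) ≤ F x - ⟪gradient F x, u ω⟫ + L / 2 * ‖u ω‖ ^ 2 := by
    intro ω
    have := (abs_le.1 (abs_sub_sub_inner_gradient_le hF hLip x (x - u ω))).2
    rw [sub_sub_cancel_left, norm_neg, inner_neg_right] at this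
    linarith
  calc ∫ ω, F (x - u ω) ∂μ
      ≤ ∫ ω, (F x - ⟪gradient F x, u ω⟫ + L / 2 * ‖u ω‖ ^ 2) ∂μ :=
        integral_mono (integrable_comp_sub_of_lipschitz_gradient hF hLip x hu)
          (hlin.add hsq) hdescent
    _ = F x - ⟪gradient F x, ∫ ω, u ω ∂μ⟫ + L / 2 * ∫ ω, ‖u ω‖ ^ 2 ∂μ := by
        rw [integral_add hlin hsq,
          integral_sub (integrable_const _) hinner, integral_const, integral_inner hu1,
          integral_const_mul]
        simp

end LipschitzGradient

section Independence

variable {Ω E : Type*} [MeasurableSpace Ω] {μ : Measure Ω} [IsFiniteMeasure μ]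
  [NormedAddCommGroup E] [InnerProductSpace ℝ E] [CompleteSpace E]
  [MeasurableSpace E] [BorelSpace E] {g n : Ω → E}

theorem ProbabilityTheory.IndepFun.integral_norm_add_sq (hgn : IndepFun g n μ)
    (hg : MemLp g 2 μ) (hn : MemLp n 2 μ) (hn0 : ∫ ω, n ω ∂μ = 0) :
    ∫ ω, ‖g ω + n ω‖ ^ 2 ∂μ = ∫ ω, ‖g ω‖ ^ 2 ∂μ + ∫ ω, ‖n ω‖ ^ 2 ∂μ := by
  have hg1 : Integrable g μ := hg.integrable one_le_two
  have hn1 : Integrable n μ := hn.integrable one_le_two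
  have hg2 : Integrable (fun ω => ‖g ω‖ ^ 2) μ := hg.integrable_norm_pow two_ne_zero
  have hcross : Integrable (fun ω => 2 * ⟪g ω, n ω⟫) μ :=
    (hgn.integrable_bilin hg1 hn1 (innerSL ℝ)).const_mul 2
  have hcross0 : ∫ ω, ⟪g ω, n ω⟫ ∂μ = 0 := by
    rw [← inner_zero_right (∫ ω, g ω ∂μ), ← hn0]
    exact hgn.integral_bilin hg1 hn1 (innerSL ℝ)
  have hgcross : Integrable (fun ω => ‖g ω‖ ^ 2 + 2 * ⟪g ω, n ω⟫) μ := hg2.add hcross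
  simp_rw [norm_add_sq_real]
  rw [integral_add hgcross (hn.integrable_norm_pow two_ne_zero),
    integral_add hg2 hcross, integral_const_mul, hcross0, mul_zero, add_zero]

end Independence

theorem stmt3_general
    {E : Type*} [NormedAddCommGroup E] [InnerProductSpace ℝ E] [FiniteDimensional ℝ E]
    [MeasurableSpace E] [BorelSpace E]
    {Ω : Type*} [MeasureSpace Ω] [IsProbabilityMeasure (ℙ : Measure Ω)]
    (F : E → ℝ) (hF : Differentiable ℝ F)
    (L : ℝ) (hL : 0 < L)
    (hLip : ∀ w w' : E, ‖gradient F w - gradient F w'‖ ≤ L * ‖w - w'‖)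
    (g n : Ω → E)
    (hgn : IndepFun g n ℙ)
    (hg : MemLp g 2 ℙ) (hn : MemLp n 2 ℙ)
    (hn0 : (∫ ω, n ω) = 0)
    (τ K : ℝ)
    (hn2 : (∫ ω, ‖n ω‖ ^ 2) = τ / K)
    (w : E)
    (μF Me Mv ME MV b δ Fstar : ℝ)
    (hμF : 0 < μF)
    (hPL : ‖gradient F w‖ ^ 2 ≥ 2 * δ * (F w - Fstar))
    (hfirst : ⟪gradient F w, ∫ ω, g ω⟫ ≥ μF * ‖gradient F w‖ ^ 2)
    (hsecond : (∫ ω, ‖g ω‖ ^ 2) ≤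
      Me + Mv / (K * b) + (ME + MV / (K * b)) * ‖gradient F w‖ ^ 2)
    (η : ℝ) (hη : 0 < η) (hηle : η ≤ μF / (L * (ME + MV / (K * b)))) :
    (∫ ω, F (w - η • (g ω + n ω))) - F w ≤
      -(η * μF * δ * (F w - Fstar)) + L * τ * η ^ 2 / (2 * K)
        + (L * η ^ 2 / 2) * (Me + Mv / (K * b)) := by
  set C := ME + MV / (K * b)
  have hstep : η * (L * C) ≤ μF := by
    rcases le_or_gt (L * C) 0 with hLC | hLC
    · exact (mul_nonpos_of_nonneg_of_nonpos hη.le hLC).trans hμF.le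
    · exact (le_div_iff₀ hLC).1 hηle
  have hdescent :=
    integral_comp_sub_le_of_lipschitz_gradient hF hLip w ((hg.add hn).const_smul η)
  simp only [Pi.add_apply, Pi.smul_apply, integral_smul, norm_smul, mul_pow, Real.norm_eq_abs,
    sq_abs, integral_const_mul, inner_smul_right, hgn.integral_norm_add_sq hg hn hn0, hn2,
    integral_add (hg.integrable one_le_two) (hn.integrable one_le_two), hn0, add_zero] at hdescent
  have hnoise : L * τ * η ^ 2 / (2 * K) = L / 2 * (η ^ 2 * (τ / K)) := by ring
  linarith [mul_le_mul_of_nonneg_left hfirst hη.le,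
    mul_le_mul_of_nonneg_left hsecond (by positivity : 0 ≤ L / 2 * η ^ 2),
    mul_nonneg (sub_nonneg.2 hstep) (mul_nonneg hη.le (sq_nonneg ‖gradient F w‖)),
    mul_le_mul_of_nonneg_left hPL (by positivity : 0 ≤ η * μF / 2)]

/-- Descent lemma combined with the Polyak–Łojasiewicz inequality:
under the moment assumptions, if `‖∇F(w)‖² ≥ 2δ(F(w) − F*)` and `F(w) ≥ F*`, then for any
step size `0 < η ≤ μ_F / (L(M_E + M_V/(Kb)))`, writing `γ = F(w) − F*`,
`E[F(w − η(g+n))] − F(w) ≤ −ημ_F δ γ + Lτη²/(2K) + (Lη²/2)(M_e + M_v/(Kb))`. -/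
theorem stmt3
    {E : Type*} [NormedAddCommGroup E] [InnerProductSpace ℝ E] [FiniteDimensional ℝ E]
    [MeasurableSpace E] [BorelSpace E]
    {Ω : Type*} [MeasureSpace Ω] [IsProbabilityMeasure (ℙ : Measure Ω)]
    (F : E → ℝ) (hF : Differentiable ℝ F)
    (L : ℝ) (hL : 0 < L)
    (hLip : ∀ w w' : E, ‖gradient F w - gradient F w'‖ ≤ L * ‖w - w'‖)
    (g n : Ω → E)
    (hgn : IndepFun g n ℙ)
    (hg : MemLp g 2 ℙ) (hn : MemLp n 2 ℙ)
    (hn0 : (∫ ω, n ω) = 0)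
    (τ K : ℝ) (hτ : 0 ≤ τ) (hK : 0 < K)
    (hn2 : (∫ ω, ‖n ω‖ ^ 2) = τ / K)
    (w : E)
    (μF Me Mv ME MV b δ Fstar : ℝ)
    (hμF : 0 < μF) (hMe : 0 < Me) (hMv : 0 < Mv) (hME : 0 < ME) (hMV : 0 < MV)
    (hb : 0 < b) (hδ : 0 ≤ δ)
    (hPL : ‖gradient F w‖ ^ 2 ≥ 2 * δ * (F w - Fstar))
    (hFstar : F w ≥ Fstar)
    (hfirst : ⟪gradient F w, ∫ ω, g ω⟫ ≥ μF * ‖gradient F w‖ ^ 2)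
    (hsecond : (∫ ω, ‖g ω‖ ^ 2) ≤
      Me + Mv / (K * b) + (ME + MV / (K * b)) * ‖gradient F w‖ ^ 2)
    (η : ℝ) (hη : 0 < η) (hηle : η ≤ μF / (L * (ME + MV / (K * b)))) :
    (∫ ω, F (w - η • (g ω + n ω))) - F w ≤
      -(η * μF * δ * (F w - Fstar)) + L * τ * η ^ 2 / (2 * K)
        + (L * η ^ 2 / 2) * (Me + Mv / (K * b)) :=
  stmt3_general F hF L hL hLip g n hgn hg hn hn0 τ K hn2 w μF Me Mv ME MV b δ Fstar hμF hPL hfirst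
    hsecond η hη hηle
end

section
/- Let E be a finite-dimensional real inner product space and g_1, …, g_n ∈ E with Σ_{i=1}^n ‖g_i‖ > 0. For a probability vector q (q_i > 0, Σ_i q_i = 1), define the trace-variance of the importance-weighted estimator as V(q) = Σ_{i=1}^n q_i·‖g_i/(n·q_i)‖² − ‖ḡ‖², where ḡ = (1/n)Σ_{i=1}^n g_i. Then for every such q, V(q) ≥ ((1/n)Σ_{i=1}^n ‖g_i‖)² − ‖ḡ‖², i.e., Σ_{i=1}^n ‖g_i‖²/q_i ≥ (Σ_{i=1}^n ‖g_i‖)²; moreover, if g_i ≠ 0 for all i, equality holds for the choice q_i = ‖g_i‖ / Σ_{j=1}^n ‖g_j‖. -/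
/-- Importance sampling yields maximal variance reduction with weights
proportional to gradient norms: for a probability vector `q` with positive entries, the
trace-variance `V(q) = Σ q_i ‖g_i/(n q_i)‖² − ‖ḡ‖²` of the importance-weighted estimator
satisfies `V(q) ≥ ((1/n) Σ ‖g_i‖)² − ‖ḡ‖²` (equivalently `Σ ‖g_i‖²/q_i ≥ (Σ ‖g_i‖)²`), and,
when all `g_i ≠ 0`, equality holds for `q_i = ‖g_i‖ / Σ_j ‖g_j‖`. -/
theorem stmt8 {E : Type*} [NormedAddCommGroup E] [InnerProductSpace ℝ E]
    [FiniteDimensional ℝ E]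
    (n : ℕ) (hn : 0 < n) (g : Fin n → E) (hg : 0 < ∑ i, ‖g i‖)
    (V : (Fin n → ℝ) → ℝ)
    (hV : ∀ q : Fin n → ℝ,
      V q = (∑ i, q i * ‖(1 / ((n : ℝ) * q i)) • g i‖ ^ 2)
        - ‖(1 / (n : ℝ)) • ∑ i, g i‖ ^ 2) :
    (∀ q : Fin n → ℝ, (∀ i, 0 < q i) → (∑ i, q i) = 1 →
      (((1 / (n : ℝ)) * ∑ i, ‖g i‖) ^ 2 - ‖(1 / (n : ℝ)) • ∑ i, g i‖ ^ 2 ≤ V q ∧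
        (∑ i, ‖g i‖) ^ 2 ≤ ∑ i, ‖g i‖ ^ 2 / q i)) ∧
    ((∀ i, g i ≠ 0) →
      V (fun i => ‖g i‖ / ∑ j, ‖g j‖) =
        ((1 / (n : ℝ)) * ∑ i, ‖g i‖) ^ 2 - ‖(1 / (n : ℝ)) • ∑ i, g i‖ ^ 2) := by
  have hn' : (0 : ℝ) < n := by exact_mod_cast hn
  -- rewrite the summand in V
  have hterm : ∀ q : Fin n → ℝ, (∀ i, 0 < q i) →
      (∑ i, q i * ‖(1 / ((n : ℝ) * q i)) • g i‖ ^ 2)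
        = (∑ i, ‖g i‖ ^ 2 / q i) / (n : ℝ) ^ 2 := by
    intro q hq
    rw [Finset.sum_div]
    refine Finset.sum_congr rfl fun i _ => ?_
    have h1 : q i ≠ 0 := (hq i).ne'
    rw [norm_smul, Real.norm_eq_abs, abs_of_pos (div_pos one_pos (mul_pos hn' (hq i)))]
    field_simp
  constructor
  · intro q hq hq1
    have hcs : (∑ i, ‖g i‖) ^ 2 ≤ ∑ i, ‖g i‖ ^ 2 / q i := by
      have := Finset.sq_sum_div_le_sum_sq_div Finset.univ (fun i => ‖g i‖)
        (fun i _ => hq i)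
      simpa [hq1] using this
    refine ⟨?_, hcs⟩
    rw [hV q, hterm q hq]
    have : ((1 / (n : ℝ)) * ∑ i, ‖g i‖) ^ 2 ≤ (∑ i, ‖g i‖ ^ 2 / q i) / (n : ℝ) ^ 2 := by
      have e : ((1 / (n : ℝ)) * ∑ i, ‖g i‖) ^ 2 = (∑ i, ‖g i‖) ^ 2 / (n : ℝ) ^ 2 := by
        ring
      rw [e]
      gcongr
    linarith
  · intro hgne
    set S := ∑ j, ‖g j‖ with hS
    have hqpos : ∀ i, 0 < ‖g i‖ / S := fun i =>
      div_pos (norm_pos_iff.2 (hgne i)) hg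
    rw [hV _, hterm _ hqpos]
    have : (∑ i, ‖g i‖ ^ 2 / (‖g i‖ / S)) = S ^ 2 := by
      have : ∀ i, ‖g i‖ ^ 2 / (‖g i‖ / S) = ‖g i‖ * S := by
        intro i
        have := norm_pos_iff.2 (hgne i)
        field_simp
      rw [Finset.sum_congr rfl fun i _ => this i, ← Finset.sum_mul, ← hS, sq]
    rw [this]
    rw [mul_pow, div_pow, one_pow]
    ring
end

section
/- Let E be a finite-dimensional real inner product space and g_1, …, g_n ∈ E with g_i ≠ 0 for all i, and let ḡ = (1/n)Σ_{i=1}^n g_i. Let u be the uniform probability vector u_i = 1/n and q* the probability vector q*_i = ‖g_i‖ / Σ_{j=1}^n ‖g_j‖, and define V(q) = Σ_{i=1}^n q_i·‖g_i/(n·q_i)‖² − ‖ḡ‖² for a probability vector q with positive entries. Then the variance reduction achieved by importance sampling satisfies V(u) − V(q*) = (1/n)Σ_{i=1}^n ‖g_i‖² − ((1/n)Σ_{i=1}^n ‖g_i‖)². -/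
/-- The variance reduction achieved by importance sampling with the optimal
weights `q*_i = ‖g_i‖ / Σ_j ‖g_j‖` over the uniform weights `u_i = 1/n` equals the
(uncorrected) empirical variance of the gradient norms:
`V(u) − V(q*) = (1/n) Σ ‖g_i‖² − ((1/n) Σ ‖g_i‖)²`. -/
theorem stmt9 {E : Type*} [NormedAddCommGroup E] [InnerProductSpace ℝ E]
    [FiniteDimensional ℝ E]
    (n : ℕ) (hn : 0 < n) (g : Fin n → E) (hgne : ∀ i, g i ≠ 0)
    (V : (Fin n → ℝ) → ℝ)
    (hV : ∀ q : Fin n → ℝ,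
      V q = (∑ i, q i * ‖(1 / ((n : ℝ) * q i)) • g i‖ ^ 2)
        - ‖(1 / (n : ℝ)) • ∑ i, g i‖ ^ 2) :
    V (fun _ => 1 / (n : ℝ)) - V (fun i => ‖g i‖ / ∑ j, ‖g j‖) =
      (1 / (n : ℝ)) * (∑ i, ‖g i‖ ^ 2) - ((1 / (n : ℝ)) * ∑ i, ‖g i‖) ^ 2 := by
  have hn' : (n : ℝ) ≠ 0 := Nat.cast_ne_zero.mpr hn.ne'
  have hS : 0 < ∑ j, ‖g j‖ :=
    Finset.sum_pos (fun i _ => norm_pos_iff.mpr (hgne i)) ⟨⟨0, hn⟩, Finset.mem_univ _⟩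
  have hS' : (∑ j, ‖g j‖) ≠ 0 := hS.ne'
  rw [hV, hV]
  have h1 : ∀ i : Fin n, (1 / (n : ℝ)) * ‖(1 / ((n : ℝ) * (1 / (n : ℝ)))) • g i‖ ^ 2
      = (1 / (n : ℝ)) * ‖g i‖ ^ 2 := by
    intro i
    rw [mul_one_div_cancel hn']
    norm_num
  have h2 : ∀ i : Fin n, (‖g i‖ / ∑ j, ‖g j‖) *
      ‖(1 / ((n : ℝ) * (‖g i‖ / ∑ j, ‖g j‖))) • g i‖ ^ 2
      = (∑ j, ‖g j‖) * ‖g i‖ / (n : ℝ) ^ 2 := by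
    intro i
    have hgi : (0:ℝ) < ‖g i‖ := norm_pos_iff.mpr (hgne i)
    rw [norm_smul, Real.norm_eq_abs, abs_of_pos (by positivity)]
    field_simp
  rw [Finset.sum_congr rfl (fun i _ => h1 i), Finset.sum_congr rfl (fun i _ => h2 i),
    ← Finset.mul_sum]
  rw [show (∑ i, (∑ j, ‖g j‖) * ‖g i‖ / (n : ℝ) ^ 2)
      = (∑ j, ‖g j‖) * (∑ i, ‖g i‖) / (n : ℝ) ^ 2 by
    rw [← Finset.sum_div, ← Finset.mul_sum]]
  field_simp
  ring
end

section
/- Let μ and ν be probability measures on a measurable space Ω and let f : Ω → ℝ be measurable with f integrable with respect to μ and with ∫ exp(f) dν < ∞. Then ∫ f dμ − log ∫ exp(f) dν ≤ KL(μ ‖ ν), where KL denotes the Kullback–Leibler divergence. -/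
open MeasureTheory Classical

/-- The Kullback–Leibler divergence `KL(μ ‖ ν) = ∫ log(dμ/dν) dμ` when `μ ≪ ν` and the
log-likelihood ratio is `μ`-integrable, and `+∞` otherwise. -/
noncomputable def klDiv {Ω : Type*} [MeasurableSpace Ω] (μ ν : Measure Ω) : EReal :=
  if μ ≪ ν ∧ Integrable (fun ω => Real.log (μ.rnDeriv ν ω).toReal) μ
  then ((∫ ω, Real.log (μ.rnDeriv ν ω).toReal ∂μ : ℝ) : EReal)
  else ⊤

/-- Lower-bound direction of the Donsker–Varadhan variational representation:
for probability measures `μ, ν` and measurable `f` with `f` `μ`-integrable and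
`∫ exp f dν < ∞`, one has `∫ f dμ − log ∫ exp f dν ≤ KL(μ ‖ ν)`. -/
theorem stmt11 {Ω : Type*} [MeasurableSpace Ω] (μ ν : Measure Ω)
    [IsProbabilityMeasure μ] [IsProbabilityMeasure ν]
    (f : Ω → ℝ) (hmeas : Measurable f)
    (hfμ : Integrable f μ)
    (hexp : Integrable (fun ω => Real.exp (f ω)) ν) :
    (((∫ ω, f ω ∂μ) - Real.log (∫ ω, Real.exp (f ω) ∂ν) : ℝ) : EReal) ≤ klDiv μ ν := by
  rw [klDiv]
  split_ifs with hcond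
  · obtain ⟨hμν, hint⟩ := hcond
    set g : Ω → ℝ := fun ω => (μ.rnDeriv ν ω).toReal with hg_def
    have hg_meas : Measurable g := (Measure.measurable_rnDeriv μ ν).ennreal_toReal
    have hg_pos : ∀ᵐ ω ∂μ, 0 < g ω := by
      filter_upwards [Measure.rnDeriv_pos hμν, hμν.ae_le (Measure.rnDeriv_lt_top μ ν)]
        with ω h1 h2
      exact ENNReal.toReal_pos h1.ne' h2.ne
    set h : Ω → ℝ := fun ω => Real.exp (f ω) / g ω with hh_def
    have hh_meas : Measurable h := (hmeas.exp).div hg_meas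
    have hgh_le : ∀ ω, |g ω * h ω| ≤ Real.exp (f ω) := by
      intro ω
      rcases eq_or_ne (g ω) 0 with h0 | h0
      · simp [h0, (Real.exp_pos _).le]
      · rw [hh_def]
        simp only
        rw [mul_div_cancel₀ _ h0, abs_of_pos (Real.exp_pos _)]
    have hgh_int : Integrable (fun ω => g ω * h ω) ν := by
      refine Integrable.mono hexp ((hg_meas.mul hh_meas).aestronglyMeasurable) ?_
      refine Filter.Eventually.of_forall fun ω => ?_
      rw [Real.norm_eq_abs, Real.norm_eq_abs, abs_of_pos (Real.exp_pos _)]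
      exact hgh_le ω
    have hh_int : Integrable h μ := by
      rw [← integrable_rnDeriv_smul_iff hμν]
      simpa [smul_eq_mul] using hgh_int
    set c : ℝ := ∫ ω, h ω ∂μ with hc_def
    have hint_eq : c = ∫ ω, g ω * h ω ∂ν := by
      rw [hc_def, ← integral_rnDeriv_smul hμν]
      simp [smul_eq_mul]
      rfl
    have hh_pos : ∀ᵐ ω ∂μ, 0 < h ω := by
      filter_upwards [hg_pos] with ω hω
      exact div_pos (Real.exp_pos _) hω
    have hc_pos : 0 < c := by
      rw [hc_def, integral_pos_iff_support_of_nonneg_ae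
        (hh_pos.mono fun ω hω => hω.le) hh_int]
      have hfull : μ {ω | 0 < h ω} = 1 := by
        rw [← measure_univ (μ := μ)]
        exact measure_congr (hh_pos.mono fun ω hω => eq_true hω)
      refine lt_of_lt_of_le (b := μ {ω | 0 < h ω}) ?_
        (measure_mono (fun ω hω => Function.mem_support.mpr (ne_of_gt hω)))
      rw [hfull]; norm_num
    have hc_le : c ≤ ∫ ω, Real.exp (f ω) ∂ν := by
      rw [hint_eq]
      exact integral_mono hgh_int hexp fun ω => (le_abs_self _).trans (hgh_le ω)
    have hptwise : ∀ᵐ ω ∂μ, f ω - Real.log (g ω) ≤ h ω / c - 1 + Real.log c := by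
      filter_upwards [hg_pos, hh_pos] with ω hgω hhω
      have h1 : Real.log (h ω / c) ≤ h ω / c - 1 :=
        Real.log_le_sub_one_of_pos (div_pos hhω hc_pos)
      have h2 : Real.log (h ω) = f ω - Real.log (g ω) := by
        rw [hh_def]
        simp only
        rw [Real.log_div (Real.exp_pos _).ne' hgω.ne', Real.log_exp]
      rw [Real.log_div hhω.ne' hc_pos.ne', h2] at h1
      linarith
    have hint_le : ∫ ω, f ω ∂μ - ∫ ω, Real.log (g ω) ∂μ ≤ Real.log c := by
      have hlhs : Integrable (fun ω => f ω - Real.log (g ω)) μ := hfμ.sub hint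
      have h1 : Integrable (fun ω => h ω / c - 1) μ :=
        (hh_int.div_const c).sub (integrable_const 1)
      have hrhs : Integrable (fun ω => h ω / c - 1 + Real.log c) μ :=
        h1.add (integrable_const _)
      have hmono := integral_mono_ae hlhs hrhs hptwise
      rw [integral_sub hfμ hint] at hmono
      have hr : ∫ ω, (h ω / c - 1 + Real.log c) ∂μ = Real.log c := by
        rw [integral_add h1 (integrable_const _),
          integral_sub (hh_int.div_const c) (integrable_const 1), integral_div, ← hc_def,
          div_self hc_pos.ne']
        simp
      rw [hr] at hmono
      exact hmono
    have hlog_le : Real.log c ≤ Real.log (∫ ω, Real.exp (f ω) ∂ν) :=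
      Real.log_le_log hc_pos hc_le
    have hfin : (∫ ω, f ω ∂μ) - Real.log (∫ ω, Real.exp (f ω) ∂ν)
        ≤ ∫ ω, Real.log (g ω) ∂μ := by linarith
    exact_mod_cast hfin
  · exact le_top
end
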